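/- Let p ≥ 3 and let H, C be N×N Hermitian matrices where C has at most r nonzero entries, each bounded in absolute value by M. Then |tr((H+C)^p) - tr(H^p) - tr(C^p)| ≤ 2^p · r · max_{1≤k≤p-1} ‖H‖^k · (rM)^{p-k}, and moreover ‖C‖ ≤ rM. -/

import Mathlib

/-!
Expanding `(H + C) ^ p` without commuting the factors, the difference of traces is the sum of the
traces of the fewer than `2 ^ p` words in `H` and `C` that contain both letters. A cyclic rotation,
which does not change the trace, makes such a word start with `C`, so its trace is `tr (C V)` with
`V` a product of `k ≥ 1` factors `H` and `p - k - 1` factors `C`. Everything is controlled by the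
entrywise `ℓ¹` norm `∑ |C i j| ≤ r M`: it bounds `‖C‖`, since `C` is a sum of its entries times
matrix units of norm one, and `|tr (C V)| ≤ (∑ |C i j|) ‖V‖` since `|V j i| ≤ ‖V‖`. Each mixed word
thus contributes at most `‖H‖ ^ k (r M) ^ (p - k)`.
-/

open Finset

/-- Operator (spectral) norm of a complex matrix. -/
noncomputable def opNorm {N : ℕ} (M : Matrix (Fin N) (Fin N) ℂ) : ℝ :=
  ‖Matrix.toEuclideanCLM (𝕜 := ℂ) M‖

theorem Fintype.sum_pow_eq_sum_prod_ofFn {ι R : Type*} [Fintype ι] [Semiring R] (g : ι → R)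
    (n : ℕ) : (∑ a, g a) ^ n = ∑ f : Fin n → ι, (List.ofFn fun i => g (f i)).prod := by
  induction n with
  | zero => simp
  | succ n ih =>
    rw [pow_succ', ih, sum_mul_sum, ← (Fin.consEquiv fun _ => ι).sum_comp, Fintype.sum_prod_type]
    simp [List.ofFn_succ]

theorem add_pow_eq_pow_add_pow_add_sum {R : Type*} [Semiring R] (a b : R) {n : ℕ} (hn : n ≠ 0) :
    (a + b) ^ n = a ^ n + b ^ n + ∑ f ∈ (univ.erase fun _ : Fin n => true).erase fun _ => false,
      ((List.ofFn f).map (cond · a b)).prod := by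
  have hTF : (fun _ : Fin n => false) ≠ fun _ => true :=
    Function.ne_iff.2 ⟨⟨0, Nat.pos_of_ne_zero hn⟩, Bool.false_ne_true⟩
  have h := Fintype.sum_pow_eq_sum_prod_ofFn (fun x => cond x a b) n
  rw [Fintype.sum_bool, cond_true, cond_false] at h
  rw [h, ← sum_erase_add _ _ (mem_univ fun _ => true),
    ← sum_erase_add _ _ (mem_erase.2 ⟨hTF, mem_univ _⟩)]
  simp only [List.map_ofFn, Function.comp_def, List.ofFn_const, List.prod_replicate, cond_true,
    cond_false]
  abel

theorem List.prod_map_cond_ofFn {M : Type*} [CommMonoid M] (x y : M) {n : ℕ} (f : Fin n → Bool) :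
    ((List.ofFn f).map (cond · x y)).prod = x ^ #{i | f i} * y ^ (n - #{i | f i}) := by
  rw [List.map_ofFn, List.prod_ofFn]
  simp only [Function.comp_apply, Bool.cond_eq_ite]
  rw [prod_ite, prod_const, prod_const, filter_not, card_sdiff_of_subset (subset_univ _),
    card_univ, Fintype.card_fin]

theorem Matrix.trace_prod_append_cons {R n : Type*} [CommSemiring R] [Fintype n]
    [DecidableEq n] (s t : List (Matrix n n R)) (a : Matrix n n R) :
    (s ++ a :: t).prod.trace = (a * (t ++ s).prod).trace := by
  rw [List.prod_append, List.prod_cons, Matrix.trace_mul_comm, List.prod_append, mul_assoc]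

theorem Matrix.sum_norm_entries_le_card_mul {E m n : Type*} [NormedAddCommGroup E] [Fintype m]
    [Fintype n] {A : Matrix m n E} {s : Finset (m × n)} (hs : ∀ q, A q.1 q.2 ≠ 0 → q ∈ s) {M : ℝ}
    (hA : ∀ i j, ‖A i j‖ ≤ M) : ∑ i, ∑ j, ‖A i j‖ ≤ #s * M := by
  rw [← Fintype.sum_prod_type', ← sum_subset (subset_univ s) fun q _ hq => ?_]
  · simpa using sum_le_card_nsmul s _ M fun q _ => hA q.1 q.2
  · rw [not_imp_comm.1 (hs q) hq, norm_zero]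

-- Under this instance `‖A‖` is definitionally `opNorm A`.
open scoped Matrix.Norms.L2Operator

namespace Matrix

variable {𝕜 m n : Type*} [RCLike 𝕜] [Fintype m] [Fintype n] [DecidableEq m] [DecidableEq n]

theorem l2_opNorm_single (i : m) (j : n) (c : 𝕜) : ‖single i j c‖ = ‖c‖ := by
  have h : ‖single i j c‖ * ‖single i j c‖ = ‖c‖ * ‖c‖ := by
    rw [← l2_opNorm_conjTranspose_mul_self, conjTranspose_single, single_mul_single_same,
      ← diagonal_single, l2_opNorm_diagonal, Pi.norm_single, norm_mul, norm_star]
  exact (mul_self_inj (norm_nonneg _) (norm_nonneg _)).1 h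

theorem norm_entry_le_l2_opNorm (A : Matrix m n 𝕜) (i : m) (j : n) : ‖A i j‖ ≤ ‖A‖ := by
  have h : single i i (1 : 𝕜) * A * single j j (1 : 𝕜) = single i j (A i j) := by simp
  calc ‖A i j‖ = ‖single i i (1 : 𝕜) * A * single j j (1 : 𝕜)‖ := by rw [h, l2_opNorm_single]
    _ ≤ ‖single i i (1 : 𝕜)‖ * ‖A‖ * ‖single j j (1 : 𝕜)‖ :=
      (l2_opNorm_mul _ _).trans (mul_le_mul_of_nonneg_right (l2_opNorm_mul _ _) (norm_nonneg _))
    _ = ‖A‖ := by simp only [l2_opNorm_single, norm_one, one_mul, mul_one]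

theorem l2_opNorm_le_sum_norm_entries (A : Matrix m n 𝕜) : ‖A‖ ≤ ∑ i, ∑ j, ‖A i j‖ := by
  conv_lhs => rw [matrix_eq_sum_single A]
  refine (norm_sum_le _ _).trans (sum_le_sum fun i _ => (norm_sum_le _ _).trans_eq ?_)
  simp only [l2_opNorm_single]

theorem norm_trace_mul_le (A B : Matrix n n 𝕜) :
    ‖trace (A * B)‖ ≤ (∑ i, ∑ j, ‖A i j‖) * ‖B‖ := by
  simp only [trace, diag, mul_apply, sum_mul]
  refine (norm_sum_le _ _).trans (sum_le_sum fun i _ => (norm_sum_le _ _).trans ?_)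
  refine sum_le_sum fun j _ => ?_
  rw [norm_mul]
  exact mul_le_mul_of_nonneg_left (norm_entry_le_l2_opNorm B j i) (norm_nonneg _)

theorem norm_trace_prod_map_cond_le {A B : Matrix n n 𝕜} {β : ℝ} (hB : ∑ i, ∑ j, ‖B i j‖ ≤ β)
    {w : List Bool} (htrue : true ∈ w) (hfalse : false ∈ w) :
    ‖trace (w.map (cond · A B)).prod‖ ≤ (w.map (cond · ‖A‖ β)).prod := by
  obtain ⟨s, t, rfl⟩ := List.append_of_mem hfalse
  have hβ : 0 ≤ β := (sum_nonneg fun i _ => sum_nonneg fun j _ => norm_nonneg (B i j)).trans hB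
  have hletter (b : Bool) : ‖cond b A B‖ ≤ cond b ‖A‖ β := by
    cases b
    · exact (l2_opNorm_le_sum_norm_entries B).trans hB
    · exact le_rfl
  -- No `NormOneClass` here (`‖1‖ = 0` for empty `n`), so `List.norm_prod_le'` needs `t ++ s ≠ []`.
  have hts : (t ++ s).map (cond · A B) ≠ [] := by
    rw [Ne, List.map_eq_nil_iff, List.append_eq_nil_iff]
    rintro ⟨rfl, rfl⟩
    simp at htrue
  rw [List.map_append, List.map_cons, cond_false, trace_prod_append_cons, ← List.map_append]
  calc ‖trace (B * ((t ++ s).map (cond · A B)).prod)‖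
      ≤ β * (((t ++ s).map (cond · A B)).map norm).prod :=
        (norm_trace_mul_le _ _).trans (mul_le_mul hB (List.norm_prod_le' hts) (norm_nonneg _) hβ)
    _ ≤ β * ((t ++ s).map (cond · ‖A‖ β)).prod := by
        rw [List.map_map]
        gcongr
        exact List.prod_map_le_prod_map₀ _ _ (fun _ _ => norm_nonneg _) fun b _ => hletter b
    _ = ((s ++ false :: t).map (cond · ‖A‖ β)).prod := by
        simp only [List.map_append, List.map_cons, cond_false, List.prod_append, List.prod_cons]
        ring

theorem norm_trace_prod_ofFn_le_sup' {A B : Matrix n n 𝕜} {β : ℝ} (hB : ∑ i, ∑ j, ‖B i j‖ ≤ β)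
    {p : ℕ} (hp : (Icc 1 (p - 1)).Nonempty) {f : Fin p → Bool} (hf_ne_false : f ≠ fun _ => false)
    (hf_ne_true : f ≠ fun _ => true) :
    ‖trace ((List.ofFn f).map (cond · A B)).prod‖ ≤
      (Icc 1 (p - 1)).sup' hp fun k => ‖A‖ ^ k * β ^ (p - k) := by
  obtain ⟨i, hi⟩ := Function.ne_iff.1 hf_ne_true
  obtain ⟨j, hj⟩ := Function.ne_iff.1 hf_ne_false
  simp only [ne_eq, Bool.not_eq_true, Bool.not_eq_false] at hi hj
  refine (norm_trace_prod_map_cond_le hB (List.mem_ofFn.2 ⟨j, hj⟩)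
    (List.mem_ofFn.2 ⟨i, hi⟩)).trans ?_
  rw [List.prod_map_cond_ofFn]
  refine le_sup' (fun k => ‖A‖ ^ k * β ^ (p - k)) (mem_Icc.2 ⟨card_pos.2 ⟨j, by simpa⟩, ?_⟩)
  have : #{x | f x} < p := by
    simpa using card_lt_card (filter_ssubset.2 ⟨i, mem_univ i, by simp [hi]⟩ :
      ({x | f x} : Finset (Fin p)) ⊂ univ)
  omega

end Matrix

open Matrix in
theorem trace_power_sparse_perturbation
    {N r p : ℕ} (hp : 3 ≤ p) (M : ℝ) (hM : 0 ≤ M)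
    (H C : Matrix (Fin N) (Fin N) ℂ)
    (hcard : (Finset.univ.filter
        (fun q : Fin N × Fin N => C q.1 q.2 ≠ 0)).card ≤ r)
    (hbnd : ∀ i j, ‖C i j‖ ≤ M) :
    opNorm C ≤ r * M ∧
      ‖((H + C) ^ p).trace - (H ^ p).trace - (C ^ p).trace‖ ≤
        2 ^ p * r *
          (Finset.Icc 1 (p - 1)).sup'
            ⟨1, Finset.mem_Icc.mpr ⟨le_refl 1, by omega⟩⟩
            (fun k => opNorm H ^ k * (r * M) ^ (p - k)) := by
  have hC : ∑ i, ∑ j, ‖C i j‖ ≤ r * M :=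
    (sum_norm_entries_le_card_mul (s := {q | C q.1 q.2 ≠ 0}) (by simp) hbnd).trans
      (mul_le_mul_of_nonneg_right (by exact_mod_cast hcard) hM)
  refine ⟨(l2_opNorm_le_sum_norm_entries C).trans hC, ?_⟩
  set S := (Icc 1 (p - 1)).sup' ⟨1, mem_Icc.mpr ⟨le_refl 1, by omega⟩⟩
    (fun k => opNorm H ^ k * (r * M) ^ (p - k))
  have hS : 0 ≤ S :=
    (mul_nonneg (pow_nonneg (norm_nonneg H) 1) (pow_nonneg (by positivity) (p - 1))).trans
      (le_sup' (fun k => opNorm H ^ k * (r * M) ^ (p - k)) (mem_Icc.mpr ⟨le_rfl, by omega⟩))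
  have hSr : S ≤ r * S := by
    rcases Nat.eq_zero_or_pos r with rfl | hr
    · refine sup'_le _ _ fun k hk => ?_
      simp [zero_pow (by rw [mem_Icc] at hk; omega : p - k ≠ 0)]
    · exact le_mul_of_one_le_left hS (by exact_mod_cast hr)
  rw [add_pow_eq_pow_add_pow_add_sum H C (by omega : p ≠ 0), trace_add, trace_add, trace_sum,
    add_assoc, add_sub_cancel_left, add_sub_cancel_left]
  calc _ ≤ ∑ _f ∈ (univ.erase fun _ : Fin p => true).erase fun _ => false, S :=
        norm_sum_le_of_le _ fun f hf => by
          obtain ⟨hfF, hfT, -⟩ := by simpa only [mem_erase] using hf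
          exact norm_trace_prod_ofFn_le_sup' hC _ hfF hfT
    _ ≤ 2 ^ p * S := by
        rw [sum_const, nsmul_eq_mul]
        exact mul_le_mul_of_nonneg_right (by exact_mod_cast (card_le_univ _).trans (by simp)) hS
    _ ≤ 2 ^ p * r * S := by
        rw [mul_assoc]
        exact mul_le_mul_of_nonneg_left hSr (by positivity)
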